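/- arXiv:2209.04882 — 3 statements merged into one kernel-verified Lean document; each statement's English description precedes it below -/
import Mathlib

section
/- Let (t₁, t₂) be centered jointly Gaussian with E[t₁²] = E[t₂²] = 1 and E[t₁t₂] = x ∈ [-1,1]. Then E[ReLU(t₁)·ReLU(t₂)] = (1/(2π))(x(π - arccos x) + √(1 - x²)). -/
open Real MeasureTheory Set Filter Topology

set_option maxHeartbeats 1000000

-- Radial integral: ∫_{0}^{∞} r³ e^{-r²/2} dr = 2
lemma radial_integral : ∫ r in Ioi (0:ℝ), r ^ 3 * Real.exp (-r ^ 2 / 2) = 2 := by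
  have hd : ∀ r ∈ Ici (0:ℝ),
      HasDerivAt (fun r : ℝ => -(r ^ 2 + 2) * Real.exp (-r ^ 2 / 2))
        (r ^ 3 * Real.exp (-r ^ 2 / 2)) r := by
    intro r _
    have h1 : HasDerivAt (fun r : ℝ => -(r ^ 2 + 2)) (-(2 * r)) r := by
      exact (((hasDerivAt_pow 2 r).add_const 2).neg).congr_deriv (by norm_num)
    have h3 : HasDerivAt (fun r : ℝ => -r ^ 2 / 2) (-(2 * r) / 2) r := by
      simpa using ((hasDerivAt_pow 2 r).neg.div_const 2)
    have h2 : HasDerivAt (fun r : ℝ => Real.exp (-r ^ 2 / 2))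
        (Real.exp (-r ^ 2 / 2) * (-(2 * r) / 2)) r := h3.exp
    have := h1.mul h2
    exact this.congr_deriv (by ring)
  have hint : IntegrableOn (fun r : ℝ => r ^ 3 * Real.exp (-r ^ 2 / 2)) (Ioi 0) := by
    have h := integrableOn_rpow_mul_exp_neg_mul_sq (show (0:ℝ) < 1/2 by norm_num)
      (show (-1:ℝ) < 3 by norm_num)
    have he : (fun r : ℝ => r ^ (3:ℝ) * Real.exp (-(1/2) * r ^ 2))
        = fun r : ℝ => r ^ 3 * Real.exp (-r ^ 2 / 2) := by
      funext r
      rw [show (3:ℝ) = ((3:ℕ):ℝ) by norm_num, Real.rpow_natCast]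
      congr 1
      ring
    rwa [he] at h
  have htend : Tendsto (fun r : ℝ => -(r ^ 2 + 2) * Real.exp (-r ^ 2 / 2)) atTop (𝓝 0) := by
    have t1 : Tendsto (fun y : ℝ => y * Real.exp (-y)) atTop (𝓝 0) := by
      simpa using Real.tendsto_pow_mul_exp_neg_atTop_nhds_zero 1
    have t2 : Tendsto (fun r : ℝ => r ^ 2 / 2) atTop atTop :=
      (tendsto_pow_atTop two_ne_zero).atTop_div_const (by norm_num)
    have t3 : Tendsto (fun r : ℝ => (r ^ 2 / 2) * Real.exp (-(r ^ 2 / 2))) atTop (𝓝 0) :=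
      t1.comp t2
    have t4 : Tendsto (fun r : ℝ => Real.exp (-(r ^ 2 / 2))) atTop (𝓝 0) :=
      Real.tendsto_exp_neg_atTop_nhds_zero.comp t2
    have := (t3.const_mul (-2)).sub (t4.const_mul 2)
    have heq : (fun r : ℝ => -2 * ((r ^ 2 / 2) * Real.exp (-(r ^ 2 / 2)))
        - 2 * Real.exp (-(r ^ 2 / 2)))
        = fun r : ℝ => -(r ^ 2 + 2) * Real.exp (-r ^ 2 / 2) := by
      funext r
      rw [show -r ^ 2 / 2 = -(r ^ 2 / 2) by ring]
      ring
    rw [heq] at this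
    simpa using this
  have := integral_Ioi_of_hasDerivAt_of_tendsto' hd hint htend
  rw [this]
  norm_num

-- Angular integral
lemma angular_integral (θ : ℝ) (h0 : 0 ≤ θ) (hπ : θ ≤ π) :
    ∫ α in Ioo (-π) π, max (Real.cos α) 0 * max (Real.cos (α - θ)) 0
      = (Real.sin θ + (π - θ) * Real.cos θ) / 2 := by
  have hpi := Real.pi_pos
  have key : EqOn (fun α => max (Real.cos α) 0 * max (Real.cos (α - θ)) 0)
      (Set.indicator (Set.Ioo (θ - π/2) (π/2)) (fun α => Real.cos α * Real.cos (α - θ)))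
      (Ioo (-π) π) := by
    intro α hα
    simp only
    by_cases hmem : α ∈ Set.Ioo (θ - π/2) (π/2)
    · rw [Set.indicator_of_mem hmem]
      have h1 : 0 ≤ Real.cos α := by
        apply Real.cos_nonneg_of_mem_Icc
        constructor
        · linarith [hmem.1]
        · linarith [hmem.2]
      have h2 : 0 ≤ Real.cos (α - θ) := by
        apply Real.cos_nonneg_of_mem_Icc
        constructor
        · linarith [hmem.1]
        · linarith [hmem.2, h0]
      rw [max_eq_left h1, max_eq_left h2]
    · rw [Set.indicator_of_notMem hmem]
      simp only [Set.mem_Ioo, not_and_or, not_lt] at hmem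
      rcases hmem with h | h
      · rcases le_or_gt (θ - 3*π/2) α with h2 | h2
        · have hc : Real.cos (α - θ) ≤ 0 := by
            have := Real.cos_nonpos_of_pi_div_two_le_of_le
              (show π/2 ≤ -(α - θ) by linarith) (show -(α - θ) ≤ π + π/2 by linarith)
            rwa [Real.cos_neg] at this
          rw [max_eq_right hc, mul_zero]
        · have hc : Real.cos α ≤ 0 := by
            have := Real.cos_nonpos_of_pi_div_two_le_of_le
              (show π/2 ≤ -α by linarith) (show -α ≤ π + π/2 by linarith [hα.1])
            rwa [Real.cos_neg] at this
          rw [max_eq_right hc, zero_mul]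
      · have hc : Real.cos α ≤ 0 :=
          Real.cos_nonpos_of_pi_div_two_le_of_le h (by linarith [hα.2])
        rw [max_eq_right hc, zero_mul]
  rw [setIntegral_congr_fun measurableSet_Ioo key,
    setIntegral_indicator measurableSet_Ioo]
  have hss : Set.Ioo (-π) π ∩ Set.Ioo (θ - π/2) (π/2) = Set.Ioo (θ - π/2) (π/2) := by
    apply Set.inter_eq_self_of_subset_right
    apply Set.Ioo_subset_Ioo <;> linarith
  rw [hss, ← integral_Ioc_eq_integral_Ioo,
    ← intervalIntegral.integral_of_le (show θ - π/2 ≤ π/2 by linarith)]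
  have hderiv : ∀ α ∈ Set.uIcc (θ - π/2) (π/2),
      HasDerivAt (fun α => Real.sin (2*α - θ)/4 + α * (Real.cos θ/2))
        (Real.cos α * Real.cos (α - θ)) α := by
    intro α _
    have h1 : HasDerivAt (fun α : ℝ => 2*α - θ) 2 α := by
      simpa using ((hasDerivAt_id α).const_mul 2).sub_const θ
    have h2 : HasDerivAt (fun α : ℝ => Real.sin (2*α - θ)) (Real.cos (2*α - θ) * 2) α := by
      exact (Real.hasDerivAt_sin (2*α - θ)).comp α h1
    have h3 := (h2.div_const 4).add ((hasDerivAt_id α).mul_const (Real.cos θ/2))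
    refine h3.congr_deriv ?_
    have e1 : Real.cos (2*α - θ)
        = Real.cos α * Real.cos (α - θ) - Real.sin α * Real.sin (α - θ) := by
      rw [show 2*α - θ = α + (α - θ) by ring, Real.cos_add]
    have e2 : Real.cos θ
        = Real.cos α * Real.cos (α - θ) + Real.sin α * Real.sin (α - θ) := by
      conv_lhs => rw [show θ = α - (α - θ) by ring, Real.cos_sub]
    rw [e1, e2]
    ring
  rw [intervalIntegral.integral_eq_sub_of_hasDerivAt hderiv
    (Continuous.intervalIntegrable (Real.continuous_cos.mul (Real.continuous_cos.comp (continuous_id.sub continuous_const))) _ _)]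
  rw [show 2*(π/2) - θ = π - θ by ring, show 2*(θ - π/2) - θ = -(π - θ) by ring,
    Real.sin_neg, Real.sin_pi_sub]
  ring

/-- arccosine kernel of Cho–Saul: for (t₁,t₂) centered jointly
Gaussian with unit variances and correlation x ∈ [-1,1], realised as
t₁ = t, t₂ = x·t + √(1-x²)·u with t, u independent standard Gaussians,
E[ReLU(t₁)ReLU(t₂)] = (1/(2π))(x(π - arccos x) + √(1-x²)). -/
theorem relu_arccos_kernel (x : ℝ) (hx : x ∈ Set.Icc (-1 : ℝ) 1) :
    (∫ t : ℝ, ∫ u : ℝ,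
        (max t 0 * max (x * t + Real.sqrt (1 - x ^ 2) * u) 0) *
          ((Real.sqrt (2 * π))⁻¹ * Real.exp (-t ^ 2 / 2)) *
          ((Real.sqrt (2 * π))⁻¹ * Real.exp (-u ^ 2 / 2)))
      = (1 / (2 * π)) * (x * (π - Real.arccos x) + Real.sqrt (1 - x ^ 2)) := by
  obtain ⟨hx1, hx2⟩ := hx
  have hpi := Real.pi_pos
  set c : ℝ := Real.sqrt (1 - x ^ 2) with hc_def
  set θ : ℝ := Real.arccos x with hθ_def
  have hcos : Real.cos θ = x := Real.cos_arccos hx1 hx2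
  have hsin : Real.sin θ = c := Real.sin_arccos x
  have hθ0 : 0 ≤ θ := Real.arccos_nonneg x
  have hθπ : θ ≤ π := Real.arccos_le_pi x
  have hc0 : 0 ≤ c := Real.sqrt_nonneg _
  have hc1 : c ≤ 1 := Real.sqrt_le_one.mpr (by nlinarith)
  set k : ℝ := (Real.sqrt (2 * π))⁻¹ with hk_def
  have hk0 : 0 ≤ k := by positivity
  have hkk : k * k = (2 * π)⁻¹ := by
    rw [hk_def, ← mul_inv, Real.mul_self_sqrt (by positivity)]
  set F : ℝ × ℝ → ℝ := fun p =>
    (max p.1 0 * max (x * p.1 + c * p.2) 0) *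
      (k * Real.exp (-p.1 ^ 2 / 2)) * (k * Real.exp (-p.2 ^ 2 / 2)) with hF_def
  -- one-dimensional integrabilities
  have hg1 : Integrable (fun t : ℝ => |t| ^ 2 * (k * Real.exp (-t ^ 2 / 2))) := by
    have h := integrable_rpow_mul_exp_neg_mul_sq (show (0:ℝ) < 1/2 by norm_num)
      (show (-1:ℝ) < 2 by norm_num)
    have he : (fun r : ℝ => r ^ (2:ℝ) * Real.exp (-(1/2) * r ^ 2))
        = fun r : ℝ => r ^ 2 * Real.exp (-r ^ 2 / 2) := by
      funext r
      rw [show (2:ℝ) = ((2:ℕ):ℝ) by norm_num, Real.rpow_natCast]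
      congr 1; ring
    rw [he] at h
    refine (h.const_mul k).congr ?_
    filter_upwards with t
    rw [sq_abs]; ring
  have hg2 : Integrable (fun t : ℝ => |t| * (k * Real.exp (-t ^ 2 / 2))) := by
    have h := integrable_rpow_mul_exp_neg_mul_sq (show (0:ℝ) < 1/2 by norm_num)
      (show (-1:ℝ) < 1 by norm_num)
    have he : (fun r : ℝ => r ^ (1:ℝ) * Real.exp (-(1/2) * r ^ 2))
        = fun r : ℝ => r * Real.exp (-r ^ 2 / 2) := by
      funext r
      rw [Real.rpow_one]
      congr 1; ring
    rw [he] at h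
    refine (h.abs.const_mul k).congr ?_
    filter_upwards with t
    rw [abs_mul, abs_of_pos (Real.exp_pos _)]; ring
  have hg3 : Integrable (fun t : ℝ => k * Real.exp (-t ^ 2 / 2)) := by
    have h := integrable_exp_neg_mul_sq (show (0:ℝ) < 1/2 by norm_num)
    have he : (fun r : ℝ => Real.exp (-(1/2) * r ^ 2))
        = fun r : ℝ => Real.exp (-r ^ 2 / 2) := by
      funext r; congr 1; ring
    rw [he] at h
    exact h.const_mul k
  have hFcont : Continuous F := by
    refine Continuous.mul (Continuous.mul ?_ ?_) ?_
    · exact ((continuous_fst.max continuous_const).mul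
        (((continuous_const.mul continuous_fst).add
          (continuous_const.mul continuous_snd)).max continuous_const))
    · exact continuous_const.mul (((continuous_fst.pow 2).neg.div_const 2).rexp)
    · exact continuous_const.mul (((continuous_snd.pow 2).neg.div_const 2).rexp)
  have hxabs : |x| ≤ 1 := abs_le.mpr ⟨hx1, hx2⟩
  have hFint : Integrable F (Measure.prod volume volume) := by
    have hbound : Integrable (fun p : ℝ × ℝ =>
        |p.1| ^ 2 * (k * Real.exp (-p.1 ^ 2 / 2)) * (k * Real.exp (-p.2 ^ 2 / 2))
        + |p.1| * (k * Real.exp (-p.1 ^ 2 / 2)) * (|p.2| * (k * Real.exp (-p.2 ^ 2 / 2))))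
        (Measure.prod volume volume) :=
      (hg1.mul_prod hg3).add (hg2.mul_prod hg2)
    refine hbound.mono hFcont.aestronglyMeasurable ?_
    filter_upwards with p
    have e1 : (0:ℝ) < Real.exp (-p.1 ^ 2 / 2) := Real.exp_pos _
    have e2 : (0:ℝ) < Real.exp (-p.2 ^ 2 / 2) := Real.exp_pos _
    have hM1 : (0:ℝ) ≤ max p.1 0 := le_max_right _ _
    have hM2 : (0:ℝ) ≤ max (x * p.1 + c * p.2) 0 := le_max_right _ _
    have hFnn : 0 ≤ F p := by
      refine mul_nonneg (mul_nonneg (mul_nonneg hM1 hM2) ?_) ?_ <;> positivity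
    have hb1 : max p.1 0 ≤ |p.1| := max_le (le_abs_self _) (abs_nonneg _)
    have hb2 : max (x * p.1 + c * p.2) 0 ≤ |p.1| + |p.2| := by
      have a1 : x * p.1 ≤ |p.1| := by
        nlinarith [le_abs_self (x * p.1), abs_mul x p.1, abs_nonneg p.1]
      have a2 : c * p.2 ≤ |p.2| := by
        nlinarith [le_abs_self (c * p.2), abs_mul c p.2, abs_nonneg p.2,
          abs_of_nonneg hc0]
      exact max_le (by linarith) (by positivity)
    rw [Real.norm_eq_abs, Real.norm_eq_abs, abs_of_nonneg hFnn,
      abs_of_nonneg (by positivity)]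
    calc F p ≤ (|p.1| * (|p.1| + |p.2|)) * (k * Real.exp (-p.1 ^ 2 / 2))
        * (k * Real.exp (-p.2 ^ 2 / 2)) := by
          refine mul_le_mul (mul_le_mul
            (mul_le_mul hb1 hb2 hM2 (abs_nonneg _)) le_rfl (by positivity)
            (by positivity)) le_rfl (by positivity) (by positivity)
      _ = _ := by ring
  -- Fubini
  have hfub := MeasureTheory.integral_integral
    (f := fun t u => (max t 0 * max (x * t + c * u) 0) *
      (k * Real.exp (-t ^ 2 / 2)) * (k * Real.exp (-u ^ 2 / 2))) hFint
  rw [hfub, ← MeasureTheory.Measure.volume_eq_prod, ← integral_comp_polarCoord_symm]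
  have hEq : EqOn
      (fun p : ℝ × ℝ => p.1 • ((max (polarCoord.symm p).1 0 *
          max (x * (polarCoord.symm p).1 + c * (polarCoord.symm p).2) 0) *
        (k * Real.exp (-(polarCoord.symm p).1 ^ 2 / 2)) *
        (k * Real.exp (-(polarCoord.symm p).2 ^ 2 / 2))))
      (fun p : ℝ × ℝ => (p.1 ^ 3 * Real.exp (-p.1 ^ 2 / 2)) *
        ((2 * π)⁻¹ * (max (Real.cos p.2) 0 * max (Real.cos (p.2 - θ)) 0)))
      polarCoord.target := by
    intro p hp
    rw [polarCoord_target] at hp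
    obtain ⟨hr, hα⟩ := hp
    simp only [polarCoord_symm_apply, smul_eq_mul]
    have hr0 : (0:ℝ) < p.1 := hr
    have hm1 : max (p.1 * Real.cos p.2) 0 = p.1 * max (Real.cos p.2) 0 := by
      rw [mul_max_of_nonneg _ _ hr0.le, mul_zero]
    have harg : x * (p.1 * Real.cos p.2) + c * (p.1 * Real.sin p.2)
        = p.1 * Real.cos (p.2 - θ) := by
      rw [Real.cos_sub, hcos, hsin]; ring
    have hm2 : max (x * (p.1 * Real.cos p.2) + c * (p.1 * Real.sin p.2)) 0
        = p.1 * max (Real.cos (p.2 - θ)) 0 := by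
      rw [harg, mul_max_of_nonneg _ _ hr0.le, mul_zero]
    have hexp : Real.exp (-(p.1 * Real.cos p.2) ^ 2 / 2) *
        Real.exp (-(p.1 * Real.sin p.2) ^ 2 / 2) = Real.exp (-p.1 ^ 2 / 2) := by
      rw [← Real.exp_add]
      congr 1
      have := Real.sin_sq_add_cos_sq p.2
      nlinarith
    rw [hm1, hm2]
    have : p.1 * ((p.1 * max (Real.cos p.2) 0 * (p.1 * max (Real.cos (p.2 - θ)) 0)) *
        (k * Real.exp (-(p.1 * Real.cos p.2) ^ 2 / 2)) *
        (k * Real.exp (-(p.1 * Real.sin p.2) ^ 2 / 2)))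
        = (p.1 ^ 3 * (Real.exp (-(p.1 * Real.cos p.2) ^ 2 / 2) *
            Real.exp (-(p.1 * Real.sin p.2) ^ 2 / 2))) *
          ((k * k) * (max (Real.cos p.2) 0 * max (Real.cos (p.2 - θ)) 0)) := by
      ring
    rw [this, hexp, hkk]
  rw [setIntegral_congr_fun polarCoord.open_target.measurableSet hEq]
  rw [polarCoord_target, MeasureTheory.Measure.volume_eq_prod,
    setIntegral_prod_mul (fun r : ℝ => r ^ 3 * Real.exp (-r ^ 2 / 2))
      (fun α : ℝ => (2 * π)⁻¹ * (max (Real.cos α) 0 * max (Real.cos (α - θ)) 0))]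
  rw [integral_const_mul, radial_integral, angular_integral θ hθ0 hθπ, hsin, hcos]
  field_simp
  ring
end

section
/- Let (t₁, t₂) be centered jointly Gaussian with covariance matrix C̃ = [[C_μμ, C_μν],[C_μν, C_νν]] (positive definite). Then E[erf(t₁)·erf(t₂)] = (2/π) arcsin( 2C_μν / √((1 + 2C_μμ)(1 + 2C_νν)) ). -/
open Real MeasureTheory Filter Topology Metric

/-- The error function erf(x) = (2/√π) ∫₀ˣ e^{-u²} du. -/
noncomputable def erf (x : ℝ) : ℝ := (2 / Real.sqrt π) * ∫ u in (0 : ℝ)..x, Real.exp (-u ^ 2)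

lemma erf_zero : erf 0 = 0 := by simp [erf]

lemma hasDerivAt_erf (x : ℝ) : HasDerivAt erf ((2 / Real.sqrt π) * Real.exp (-x ^ 2)) x := by
  have h : Continuous fun u : ℝ => Real.exp (-u ^ 2) := by continuity
  exact ((h.integral_hasStrictDerivAt 0 x).hasDerivAt.const_mul _)

lemma continuous_erf : Continuous erf :=
  continuous_iff_continuousAt.2 fun x => (hasDerivAt_erf x).continuousAt

lemma erf_neg (x : ℝ) : erf (-x) = - erf x := by
  have h := intervalIntegral.integral_comp_neg (a := 0) (b := x) (fun u => Real.exp (-u ^ 2))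
  have h2 : ∀ u : ℝ, Real.exp (-(-u) ^ 2) = Real.exp (-u ^ 2) := fun u => by ring_nf
  simp only [h2, neg_zero] at h
  unfold erf
  rw [← mul_neg]
  congr 1
  rw [intervalIntegral.integral_symm, ← h]

lemma abs_erf_le (x : ℝ) : |erf x| ≤ (2 / Real.sqrt π) * |x| := by
  have h2 : (0:ℝ) ≤ 2 / Real.sqrt π := by positivity
  have key : |∫ u in (0:ℝ)..x, Real.exp (-u ^ 2)| ≤ |x| := by
    rw [← Real.norm_eq_abs (∫ u in (0:ℝ)..x, Real.exp (-u ^ 2))]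
    calc ‖∫ u in (0:ℝ)..x, Real.exp (-u ^ 2)‖ ≤ 1 * |x - 0| := by
          apply intervalIntegral.norm_integral_le_of_norm_le_const
          intro u _
          rw [Real.norm_eq_abs, abs_of_pos (Real.exp_pos _)]
          exact Real.exp_le_one_iff.2 (neg_nonpos.2 (sq_nonneg u))
      _ = |x| := by simp
  unfold erf
  rw [abs_mul, abs_of_nonneg h2]
  exact mul_le_mul_of_nonneg_left key h2

lemma integrable_exp_quad {b : ℝ} (hb : 0 < b) (c : ℝ) :
    Integrable (fun x : ℝ => Real.exp (-b * x ^ 2 + c * x)) := by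
  have key : ∀ x : ℝ, Real.exp (-b * x ^ 2 + c * x)
      = Real.exp (c ^ 2 / (4 * b)) * Real.exp (-b * (x - c / (2 * b)) ^ 2) := by
    intro x
    rw [← Real.exp_add]
    congr 1
    field_simp
    ring
  simp only [key]
  exact ((integrable_exp_neg_mul_sq hb).comp_sub_right (c / (2*b))).const_mul _

lemma integral_exp_quad {b : ℝ} (hb : 0 < b) (c : ℝ) :
    ∫ x : ℝ, Real.exp (-b * x ^ 2 + c * x) = Real.sqrt (π / b) * Real.exp (c ^ 2 / (4 * b)) := by
  have key : ∀ x : ℝ, Real.exp (-b * x ^ 2 + c * x)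
      = Real.exp (c ^ 2 / (4 * b)) * Real.exp (-b * (x - c / (2 * b)) ^ 2) := by
    intro x
    rw [← Real.exp_add]; congr 1; field_simp; ring
  simp only [key]
  rw [integral_const_mul,
    integral_sub_right_eq_self (fun x => Real.exp (-b * x ^ 2)) (c / (2*b)),
    integral_gaussian]
  ring

lemma integrable_quad_gauss {b : ℝ} (hb : 0 < b) :
    Integrable (fun x : ℝ => (x ^ 2 + 1) * Real.exp (-b * x ^ 2)) := by
  have h1 : Integrable (fun x : ℝ => Real.exp (-(b/2) * x ^ 2)) :=
    integrable_exp_neg_mul_sq (by linarith)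
  apply (h1.const_mul ((2/b) + 1)).mono'
  · exact Continuous.aestronglyMeasurable (by continuity)
  · filter_upwards with x
    rw [Real.norm_eq_abs, abs_of_nonneg (by positivity)]
    have hpos := Real.exp_pos ((b/2) * x ^ 2)
    have hx : x ^ 2 * (b/2) + 1 ≤ Real.exp ((b/2) * x ^ 2) := by
      have := Real.add_one_le_exp ((b/2) * x ^ 2)
      nlinarith
    have hsplit : Real.exp (-b * x ^ 2)
        = Real.exp (-((b/2) * x ^ 2)) * Real.exp (-(b/2) * x ^ 2) := by
      rw [← Real.exp_add]; ring_nf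
    rw [hsplit, Real.exp_neg, ← mul_assoc]
    have he : (x ^ 2 + 1) * (Real.exp ((b/2) * x ^ 2))⁻¹ ≤ 2/b + 1 := by
      rw [← div_eq_mul_inv, div_le_iff₀ hpos]
      have hb2 : (0:ℝ) < 2/b := by positivity
      have h3 : (2/b) * (x ^ 2 * (b/2) + 1) ≤ (2/b) * Real.exp ((b/2) * x ^ 2) :=
        mul_le_mul_of_nonneg_left hx hb2.le
      have h4 : (2/b) * (x ^ 2 * (b/2) + 1) = x ^ 2 + 2/b := by field_simp
      have h5 : (1:ℝ) ≤ Real.exp ((b/2) * x ^ 2) := by nlinarith [sq_nonneg x]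
      nlinarith
    have hexp2 : (0:ℝ) < Real.exp (-(b/2) * x ^ 2) := Real.exp_pos _
    calc (x ^ 2 + 1) * (Real.exp ((b/2) * x ^ 2))⁻¹ * Real.exp (-(b/2) * x ^ 2)
        ≤ (2/b + 1) * Real.exp (-(b/2) * x ^ 2) := by
          exact mul_le_mul_of_nonneg_right he hexp2.le
      _ = (2/b + 1) * Real.exp (-(b/2) * x ^ 2) := rfl

lemma integrable_of_le_quad_gauss {f : ℝ → ℝ} (hf : AEStronglyMeasurable f volume)
    {b C : ℝ} (hb : 0 < b)
    (h : ∀ x, |f x| ≤ C * ((x ^ 2 + 1) * Real.exp (-b * x ^ 2))) : Integrable f := by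
  apply ((integrable_quad_gauss hb).const_mul C).mono' hf
  filter_upwards with x
  exact h x

lemma tendsto_erf_gauss (a : ℝ) {q : ℝ} (hq : 0 < q) :
    Tendsto (fun x : ℝ => erf (a * x) * Real.exp (-q * x ^ 2)) (cocompact ℝ) (𝓝 0) := by
  have h := (tendsto_rpow_abs_mul_exp_neg_mul_sq_cocompact hq 1).const_mul
    ((2 / Real.sqrt π) * |a|)
  rw [mul_zero] at h
  apply squeeze_zero_norm _ h
  intro x
  rw [Real.norm_eq_abs, abs_mul, abs_of_pos (Real.exp_pos _)]
  have h1 : |erf (a * x)| ≤ (2 / Real.sqrt π) * |a| * |x| := by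
    calc |erf (a * x)| ≤ (2 / Real.sqrt π) * |a * x| := abs_erf_le _
      _ = (2 / Real.sqrt π) * |a| * |x| := by rw [abs_mul]; ring
  calc |erf (a * x)| * Real.exp (-q * x ^ 2)
      ≤ ((2 / Real.sqrt π) * |a| * |x|) * Real.exp (-q * x ^ 2) :=
        mul_le_mul_of_nonneg_right h1 (Real.exp_pos _).le
    _ = (2 / Real.sqrt π) * |a| * (|x| ^ (1:ℝ) * Real.exp (-q * x ^ 2)) := by
        rw [Real.rpow_one]; ring

lemma sqrt_pi_pos : 0 < Real.sqrt π := Real.sqrt_pos.2 Real.pi_pos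

lemma integral_id_mul_erf_gauss (a : ℝ) {q : ℝ} (hq : 0 < q) :
    ∫ x : ℝ, x * erf (a * x) * Real.exp (-q * x ^ 2) = a / (q * Real.sqrt (a ^ 2 + q)) := by
  set g : ℝ → ℝ := fun x => -(erf (a * x) * Real.exp (-q * x ^ 2)) / (2 * q) with hg
  set g' : ℝ → ℝ := fun x =>
    x * erf (a * x) * Real.exp (-q * x ^ 2)
      - (a / (2 * q)) * ((2 / Real.sqrt π) * Real.exp (-(a ^ 2 + q) * x ^ 2)) with hg'
  have haq : 0 < a ^ 2 + q := by positivity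
  have hderiv : ∀ x, HasDerivAt g (g' x) x := by
    intro x
    have h1 : HasDerivAt (fun x : ℝ => erf (a * x))
        ((2 / Real.sqrt π) * Real.exp (-(a * x) ^ 2) * a) x :=
      by simpa [Function.comp_def] using (hasDerivAt_erf (a * x)).comp x ((hasDerivAt_id x).const_mul a)
    have h2 : HasDerivAt (fun x : ℝ => Real.exp (-q * x ^ 2))
        (Real.exp (-q * x ^ 2) * (-q * (2 * x))) x := by
      have := ((hasDerivAt_pow 2 x).const_mul (-q)).exp
      simpa using this.congr_deriv (by ring)
    have h3 := (h1.mul h2).neg.div_const (2 * q)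
    apply h3.congr_deriv
    have hexp : Real.exp (-(a * x) ^ 2) * Real.exp (-q * x ^ 2)
        = Real.exp (-(a ^ 2 + q) * x ^ 2) := by
      rw [← Real.exp_add]; ring_nf
    simp only [hg']
    rw [show (2 / Real.sqrt π) * Real.exp (-(a ^ 2 + q) * x ^ 2)
        = (2 / Real.sqrt π) * Real.exp (-(a * x) ^ 2) * Real.exp (-q * x ^ 2) by
          rw [mul_assoc, hexp]]
    field_simp
    ring
  have htend : Tendsto g (cocompact ℝ) (𝓝 0) := by
    have h := ((tendsto_erf_gauss a hq).neg).div_const (2 * q)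
    simpa only [neg_zero, zero_div] using h
  have hbot : Tendsto g atBot (𝓝 0) :=
    htend.mono_left (by rw [cocompact_eq_atBot_atTop]; exact le_sup_left)
  have htop : Tendsto g atTop (𝓝 0) :=
    htend.mono_left (by rw [cocompact_eq_atBot_atTop]; exact le_sup_right)
  have hcont1 : Continuous (fun x : ℝ => x * erf (a * x) * Real.exp (-q * x ^ 2)) := by
    exact (continuous_id.mul (continuous_erf.comp (continuous_const.mul continuous_id))).mul
      (by continuity)
  have hint1 : Integrable (fun x : ℝ => x * erf (a * x) * Real.exp (-q * x ^ 2)) := by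
    apply integrable_of_le_quad_gauss hcont1.aestronglyMeasurable hq
      (C := (2 / Real.sqrt π) * |a|)
    intro x
    have he : |erf (a * x)| ≤ (2 / Real.sqrt π) * (|a| * |x|) := by
      have := abs_erf_le (a * x); rwa [abs_mul] at this
    have hx : (0:ℝ) ≤ |x| := abs_nonneg x
    have hE := Real.exp_pos (-q * x ^ 2)
    have hc : (0:ℝ) ≤ 2 / Real.sqrt π := by positivity
    rw [abs_mul, abs_mul, abs_of_pos hE]
    have h1 : |x| * |erf (a * x)| ≤ (2 / Real.sqrt π) * |a| * (x ^ 2 + 1) := by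
      calc |x| * |erf (a * x)| ≤ |x| * ((2 / Real.sqrt π) * (|a| * |x|)) := by
            exact mul_le_mul_of_nonneg_left he hx
        _ = (2 / Real.sqrt π) * |a| * (|x| * |x|) := by ring
        _ ≤ (2 / Real.sqrt π) * |a| * (x ^ 2 + 1) := by
            apply mul_le_mul_of_nonneg_left _ (by positivity)
            nlinarith [abs_mul_abs_self x]
    calc |x| * |erf (a * x)| * Real.exp (-q * x ^ 2)
        ≤ ((2 / Real.sqrt π) * |a| * (x ^ 2 + 1)) * Real.exp (-q * x ^ 2) :=
          mul_le_mul_of_nonneg_right h1 hE.le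
      _ = (2 / Real.sqrt π) * |a| * ((x ^ 2 + 1) * Real.exp (-q * x ^ 2)) := by ring
  have hint2 : Integrable (fun x : ℝ =>
      (a / (2 * q)) * ((2 / Real.sqrt π) * Real.exp (-(a ^ 2 + q) * x ^ 2))) :=
    ((integrable_exp_neg_mul_sq haq).const_mul _).const_mul _
  have hintg' : Integrable g' := hint1.sub hint2
  have h0 : ∫ x, g' x = 0 - 0 :=
    integral_of_hasDerivAt_of_tendsto hderiv hintg' hbot htop
  have hsub := integral_sub hint1 hint2
  have h2 : (∫ x : ℝ, x * erf (a * x) * Real.exp (-q * x ^ 2))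
      = ∫ x : ℝ, (a / (2 * q)) * ((2 / Real.sqrt π) * Real.exp (-(a ^ 2 + q) * x ^ 2)) := by
    have : ∫ x, g' x = (∫ x : ℝ, x * erf (a * x) * Real.exp (-q * x ^ 2))
        - ∫ x : ℝ, (a / (2 * q)) * ((2 / Real.sqrt π) * Real.exp (-(a ^ 2 + q) * x ^ 2)) := hsub
    rw [h0] at this
    linarith
  rw [h2, integral_const_mul, integral_const_mul, integral_gaussian]
  have h3 : Real.sqrt (π / (a ^ 2 + q)) = Real.sqrt π / Real.sqrt (a ^ 2 + q) := by
    rw [Real.sqrt_div Real.pi_pos.le]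
  rw [h3]
  have hπ : Real.sqrt π ≠ 0 := ne_of_gt sqrt_pi_pos
  have haq' : Real.sqrt (a ^ 2 + q) ≠ 0 := ne_of_gt (Real.sqrt_pos.2 haq)
  field_simp

lemma eq_of_hasDerivAt_of_eq_zero {F G H : ℝ → ℝ}
    (hF : ∀ x, HasDerivAt F (H x) x) (hG : ∀ x, HasDerivAt G (H x) x)
    (h0 : F 0 = G 0) (x : ℝ) : F x = G x := by
  have hd : Differentiable ℝ (F - G) := fun y =>
    ((hF y).sub (hG y)).differentiableAt
  have hz : ∀ y, deriv (F - G) y = 0 := fun y => by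
    have := ((hF y).sub (hG y)).deriv
    simpa using this
  have := is_const_of_deriv_eq_zero hd hz x 0
  have h2 : F x - G x = F 0 - G 0 := this
  linarith

lemma integrable_erf_shift_gauss {v : ℝ} (hv : 0 < v) (k : ℝ) :
    Integrable (fun x : ℝ => erf (x + k) * Real.exp (-x ^ 2 / (2 * v))) := by
  have hb : (0:ℝ) < 1 / (2 * v) := by positivity
  refine integrable_of_le_quad_gauss
    (f := fun x : ℝ => erf (x + k) * Real.exp (-x ^ 2 / (2 * v)))
    (Continuous.aestronglyMeasurable
      ((continuous_erf.comp (by continuity)).mul (by continuity))) hb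
    (C := (2 / Real.sqrt π) * (1 + |k|)) fun x => ?_
  have hE : Real.exp (-x ^ 2 / (2 * v)) = Real.exp (-(1 / (2 * v)) * x ^ 2) := by ring_nf
  have hEp := Real.exp_pos (-x ^ 2 / (2 * v))
  have key : |erf (x + k)| ≤ (2 / Real.sqrt π) * ((1 + |k|) * (x ^ 2 + 1)) := by
    calc |erf (x + k)| ≤ (2 / Real.sqrt π) * |x + k| := abs_erf_le _
      _ ≤ (2 / Real.sqrt π) * ((1 + |k|) * (x ^ 2 + 1)) := by
          apply mul_le_mul_of_nonneg_left _ (by positivity)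
          have h1 : |x + k| ≤ |x| + |k| := abs_add_le x k
          have h2 : |x| ≤ x ^ 2 + 1 := by nlinarith [abs_mul_abs_self x, abs_nonneg x, sq_nonneg (|x| - 1)]
          have h3 : (0:ℝ) ≤ x ^ 2 + 1 := by positivity
          have h4 : |k| ≤ |k| * (x ^ 2 + 1) := le_mul_of_one_le_right (abs_nonneg k) (by nlinarith)
          nlinarith
  rw [abs_mul, abs_of_pos hEp, hE]
  calc |erf (x + k)| * Real.exp (-(1 / (2 * v)) * x ^ 2)
      ≤ ((2 / Real.sqrt π) * ((1 + |k|) * (x ^ 2 + 1))) * Real.exp (-(1 / (2 * v)) * x ^ 2) :=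
        mul_le_mul_of_nonneg_right key (Real.exp_pos _).le
    _ = (2 / Real.sqrt π) * (1 + |k|) * ((x ^ 2 + 1) * Real.exp (-(1 / (2 * v)) * x ^ 2)) := by
        ring

lemma integral_erf_shift_gauss {v : ℝ} (hv : 0 < v) (m : ℝ) :
    ∫ x : ℝ, erf (x + m) * Real.exp (-x ^ 2 / (2 * v))
      = Real.sqrt (2 * π * v) * erf (m / Real.sqrt (1 + 2 * v)) := by
  have h12v : (0:ℝ) < 1 + 2 * v := by linarith
  set H : ℝ → ℝ := fun m =>
    (2 / Real.sqrt π) * Real.sqrt (2 * π * v / (1 + 2 * v)) * Real.exp (-m ^ 2 / (1 + 2 * v))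
    with hH
  set F : ℝ → ℝ := fun m => ∫ x : ℝ, erf (x + m) * Real.exp (-x ^ 2 / (2 * v)) with hF
  set G : ℝ → ℝ := fun m => Real.sqrt (2 * π * v) * erf (m / Real.sqrt (1 + 2 * v)) with hG
  have hFd : ∀ m : ℝ, HasDerivAt F (H m) m := by
    intro m
    have key := hasDerivAt_integral_of_dominated_loc_of_deriv_le (μ := volume)
      (F := fun k x => erf (x + k) * Real.exp (-x ^ 2 / (2 * v)))
      (F' := fun k x => (2 / Real.sqrt π) * Real.exp (-(x + k) ^ 2) * Real.exp (-x ^ 2 / (2 * v)))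
      (x₀ := m) (s := Metric.ball m 1) (bound := fun x => (2 / Real.sqrt π) * Real.exp (-x ^ 2 / (2 * v)))
      (Metric.ball_mem_nhds _ one_pos)
      (Eventually.of_forall fun k =>
        ((continuous_erf.comp (by continuity)).mul (by continuity)).aestronglyMeasurable)
      (integrable_erf_shift_gauss hv m)
      (((continuous_const.mul (by continuity)).mul (by continuity)).aestronglyMeasurable)
      (Eventually.of_forall fun x k _hk => by
        have h1 : Real.exp (-(x + k) ^ 2) ≤ 1 :=
          Real.exp_le_one_iff.2 (neg_nonpos.2 (sq_nonneg _))
        rw [Real.norm_eq_abs, abs_mul, abs_mul,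
          abs_of_pos (Real.exp_pos _), abs_of_pos (Real.exp_pos _),
          abs_of_nonneg (by positivity : (0:ℝ) ≤ 2 / Real.sqrt π)]
        calc 2 / Real.sqrt π * Real.exp (-(x + k) ^ 2) * Real.exp (-x ^ 2 / (2 * v))
            ≤ 2 / Real.sqrt π * 1 * Real.exp (-x ^ 2 / (2 * v)) := by
              apply mul_le_mul_of_nonneg_right _ (Real.exp_pos _).le
              exact mul_le_mul_of_nonneg_left h1 (by positivity)
          _ = 2 / Real.sqrt π * Real.exp (-x ^ 2 / (2 * v)) := by ring)
      (((integrable_exp_neg_mul_sq (show (0:ℝ) < 1 / (2*v) by positivity)).const_mul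
          (2 / Real.sqrt π)).congr (Eventually.of_forall fun x => by
        show 2 / Real.sqrt π * Real.exp (-(1/(2*v)) * x ^ 2)
          = 2 / Real.sqrt π * Real.exp (-x ^ 2 / (2*v))
        rw [show -(1/(2*v)) * x ^ 2 = -x ^ 2 / (2*v) by ring]))
      (Eventually.of_forall fun x k _hk => by
        have h1 : HasDerivAt (fun k : ℝ => erf (x + k))
            ((2 / Real.sqrt π) * Real.exp (-(x + k) ^ 2)) k := by
          simpa [Function.comp_def] using (hasDerivAt_erf (x + k)).comp k ((hasDerivAt_id k).const_add x)
        exact h1.mul_const _)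
    obtain ⟨-, hd⟩ := key
    -- now compute the integral of F' m
    have hcalc : (∫ x : ℝ, (2 / Real.sqrt π) * Real.exp (-(x + m) ^ 2)
        * Real.exp (-x ^ 2 / (2 * v))) = H m := by
      have hb : (0:ℝ) < (1 + 2*v) / (2*v) := by positivity
      have hrw : ∀ x : ℝ, (2 / Real.sqrt π) * Real.exp (-(x + m) ^ 2)
          * Real.exp (-x ^ 2 / (2 * v))
          = ((2 / Real.sqrt π) * Real.exp (-m ^ 2)) *
            Real.exp (-((1 + 2*v) / (2*v)) * x ^ 2 + (-2*m) * x) := by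
        intro x
        have harg : -(x + m) ^ 2 + -x ^ 2 / (2 * v)
            = -m ^ 2 + (-((1 + 2*v)/(2*v)) * x ^ 2 + (-2*m) * x) := by
          field_simp
          ring
        rw [mul_assoc, mul_assoc, ← Real.exp_add, ← Real.exp_add, harg]
      simp only [hrw]
      rw [integral_const_mul, integral_exp_quad hb (-2*m), hH]
      have e1 : π / ((1 + 2*v) / (2*v)) = 2 * π * v / (1 + 2*v) := by field_simp
      rw [e1]
      have hexp2 : Real.exp (-m ^ 2) * Real.exp ((-2*m) ^ 2 / (4 * ((1 + 2*v)/(2*v))))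
          = Real.exp (-m ^ 2 / (1 + 2*v)) := by
        rw [← Real.exp_add]
        congr 1
        field_simp
        ring
      show 2 / Real.sqrt π * Real.exp (-m ^ 2)
          * (Real.sqrt (2 * π * v / (1 + 2 * v))
            * Real.exp ((-2 * m) ^ 2 / (4 * ((1 + 2 * v) / (2 * v)))))
          = 2 / Real.sqrt π * Real.sqrt (2 * π * v / (1 + 2 * v))
            * Real.exp (-m ^ 2 / (1 + 2 * v))
      rw [← hexp2]
      ring
    rw [← hcalc]
    exact hd
  have hGd : ∀ m : ℝ, HasDerivAt G (H m) m := by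
    intro m
    have h1 : HasDerivAt (fun m : ℝ => erf (m / Real.sqrt (1 + 2 * v)))
        ((2 / Real.sqrt π) * Real.exp (-(m / Real.sqrt (1 + 2 * v)) ^ 2)
          * (1 / Real.sqrt (1 + 2 * v))) m := by
      have := (hasDerivAt_erf (m / Real.sqrt (1 + 2 * v))).comp m
        ((hasDerivAt_id m).div_const (Real.sqrt (1 + 2 * v)))
      simpa [Function.comp_def] using this
    have h2 := h1.const_mul (Real.sqrt (2 * π * v))
    apply h2.congr_deriv
    have hs : Real.sqrt (1 + 2 * v) ^ 2 = 1 + 2 * v := Real.sq_sqrt h12v.le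
    have hsp : 0 < Real.sqrt (1 + 2 * v) := Real.sqrt_pos.2 h12v
    have hdiv : Real.sqrt (2 * π * v) / Real.sqrt (1 + 2 * v)
        = Real.sqrt (2 * π * v / (1 + 2 * v)) := by
      rw [Real.sqrt_div (by positivity : (0:ℝ) ≤ 2 * π * v)]
    have hexp : Real.exp (-(m / Real.sqrt (1 + 2 * v)) ^ 2) = Real.exp (-m ^ 2 / (1 + 2 * v)) := by
      congr 1
      rw [div_pow, hs]
      ring
    rw [hH, hexp]
    rw [← hdiv]
    field_simp
  have h0 : F 0 = G 0 := by
    have hodd : (∫ x : ℝ, erf x * Real.exp (-x ^ 2 / (2 * v))) = 0 := by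
      have hneg := integral_neg_eq_self (fun x : ℝ => erf x * Real.exp (-x ^ 2 / (2 * v))) volume
      have : (∫ x : ℝ, erf (-x) * Real.exp (-(-x) ^ 2 / (2 * v)))
          = ∫ x : ℝ, erf x * Real.exp (-x ^ 2 / (2 * v)) := hneg
      simp only [erf_neg, neg_mul, neg_neg] at this
      have h2 : (∫ x : ℝ, -(erf x * Real.exp (-(-x) ^ 2 / (2 * v))))
          = - ∫ x : ℝ, erf x * Real.exp (-(-x) ^ 2 / (2 * v)) := integral_neg _
      rw [h2] at this
      simp only [neg_pow, neg_neg, (by intro x; ring_nf : ∀ x : ℝ, (-x) ^ 2 = x ^ 2)] at this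
      linarith
    rw [hF, hG]
    simp only [add_zero, zero_div, erf_zero, mul_zero]
    simpa using hodd
  exact eq_of_hasDerivAt_of_eq_zero hFd hGd h0 m

lemma integrable_erf_erf_gauss {c : ℝ} (hc : 0 < c) (k : ℝ) :
    Integrable (fun x : ℝ => erf x * erf (k * x) * Real.exp (-x ^ 2 / (2 * c))) := by
  have hb : (0:ℝ) < 1 / (2 * c) := by positivity
  refine integrable_of_le_quad_gauss
    (f := fun x : ℝ => erf x * erf (k * x) * Real.exp (-x ^ 2 / (2 * c)))
    (Continuous.aestronglyMeasurable
      ((continuous_erf.mul (continuous_erf.comp (by continuity))).mul (by continuity))) hb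
    (C := (2 / Real.sqrt π) ^ 2 * |k|) fun x => ?_
  have hE : Real.exp (-x ^ 2 / (2 * c)) = Real.exp (-(1 / (2 * c)) * x ^ 2) := by ring_nf
  have hc2 : (0:ℝ) ≤ 2 / Real.sqrt π := by positivity
  have key : |erf x * erf (k * x)| ≤ (2 / Real.sqrt π) ^ 2 * |k| * (x ^ 2 + 1) := by
    rw [abs_mul]
    calc |erf x| * |erf (k * x)|
        ≤ ((2 / Real.sqrt π) * |x|) * ((2 / Real.sqrt π) * (|k| * |x|)) := by
          apply mul_le_mul (abs_erf_le x) _ (abs_nonneg _) (by positivity)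
          have := abs_erf_le (k * x); rwa [abs_mul] at this
      _ = (2 / Real.sqrt π) ^ 2 * |k| * (|x| * |x|) := by ring
      _ ≤ (2 / Real.sqrt π) ^ 2 * |k| * (x ^ 2 + 1) := by
          apply mul_le_mul_of_nonneg_left _ (by positivity)
          nlinarith [abs_mul_abs_self x]
  rw [abs_mul, abs_of_pos (Real.exp_pos _), hE]
  calc |erf x * erf (k * x)| * Real.exp (-(1 / (2 * c)) * x ^ 2)
      ≤ ((2 / Real.sqrt π) ^ 2 * |k| * (x ^ 2 + 1)) * Real.exp (-(1 / (2 * c)) * x ^ 2) :=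
        mul_le_mul_of_nonneg_right key (Real.exp_pos _).le
    _ = (2 / Real.sqrt π) ^ 2 * |k| * ((x ^ 2 + 1) * Real.exp (-(1 / (2 * c)) * x ^ 2)) := by ring

lemma integral_erf_mul_erf_gauss {c : ℝ} (hc : 0 < c) (k : ℝ) :
    ∫ x : ℝ, erf x * erf (k * x) * Real.exp (-x ^ 2 / (2 * c))
      = Real.sqrt (2 * π * c) * ((2 / π) *
          Real.arcsin (2 * c * k / Real.sqrt ((1 + 2 * c) * (1 + 2 * c * k ^ 2)))) := by
  set H : ℝ → ℝ := fun k => Real.sqrt (2 * π * c) * (2 / π) *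
    (2 * c / ((1 + 2 * c * k ^ 2) * Real.sqrt (1 + 2 * c + 2 * c * k ^ 2))) with hH
  set F : ℝ → ℝ := fun k => ∫ x : ℝ, erf x * erf (k * x) * Real.exp (-x ^ 2 / (2 * c)) with hF
  set G : ℝ → ℝ := fun k => Real.sqrt (2 * π * c) * ((2 / π) *
    Real.arcsin (2 * c * k / Real.sqrt ((1 + 2 * c) * (1 + 2 * c * k ^ 2)))) with hG
  have h2c : (0:ℝ) < 2 * c := by linarith
  have hFd : ∀ k : ℝ, HasDerivAt F (H k) k := by
    intro k
    have key := hasDerivAt_integral_of_dominated_loc_of_deriv_le (μ := volume)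
      (F := fun k x => erf x * erf (k * x) * Real.exp (-x ^ 2 / (2 * c)))
      (F' := fun k x => erf x * ((2 / Real.sqrt π) * Real.exp (-(k * x) ^ 2) * x)
        * Real.exp (-x ^ 2 / (2 * c)))
      (x₀ := k) (s := Metric.ball k 1)
      (bound := fun x => (2 / Real.sqrt π) ^ 2 * ((x ^ 2 + 1) * Real.exp (-(1/(2*c)) * x ^ 2)))
      (Metric.ball_mem_nhds _ one_pos)
      (Eventually.of_forall fun k => (integrable_erf_erf_gauss hc k).aestronglyMeasurable)
      (integrable_erf_erf_gauss hc k)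
      (Continuous.aestronglyMeasurable (by
        exact (continuous_erf.mul ((continuous_const.mul (by continuity)).mul continuous_id)).mul
          (by continuity)))
      (Eventually.of_forall fun x k' _hk => by
        have h1 : Real.exp (-(k' * x) ^ 2) ≤ 1 :=
          Real.exp_le_one_iff.2 (neg_nonpos.2 (sq_nonneg _))
        have hE : Real.exp (-x ^ 2 / (2 * c)) = Real.exp (-(1 / (2 * c)) * x ^ 2) := by ring_nf
        rw [Real.norm_eq_abs, abs_mul, abs_mul, abs_of_pos (Real.exp_pos _), hE]
        have h2 : |erf x| ≤ (2 / Real.sqrt π) * |x| := abs_erf_le x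
        have h3 : |(2 / Real.sqrt π) * Real.exp (-(k' * x) ^ 2) * x|
            ≤ (2 / Real.sqrt π) * |x| := by
          rw [abs_mul, abs_mul, abs_of_nonneg (by positivity : (0:ℝ) ≤ 2 / Real.sqrt π),
            abs_of_pos (Real.exp_pos _)]
          calc 2 / Real.sqrt π * Real.exp (-(k' * x) ^ 2) * |x|
              ≤ 2 / Real.sqrt π * 1 * |x| := by
                apply mul_le_mul_of_nonneg_right _ (abs_nonneg x)
                exact mul_le_mul_of_nonneg_left h1 (by positivity)
            _ = 2 / Real.sqrt π * |x| := by ring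
        calc |erf x| * |(2 / Real.sqrt π) * Real.exp (-(k' * x) ^ 2) * x|
              * Real.exp (-(1 / (2 * c)) * x ^ 2)
            ≤ ((2 / Real.sqrt π) * |x|) * ((2 / Real.sqrt π) * |x|)
              * Real.exp (-(1 / (2 * c)) * x ^ 2) := by
              apply mul_le_mul_of_nonneg_right _ (Real.exp_pos _).le
              exact mul_le_mul h2 h3 (abs_nonneg _) (by positivity)
          _ ≤ (2 / Real.sqrt π) ^ 2 * ((x ^ 2 + 1) * Real.exp (-(1/(2*c)) * x ^ 2)) := by
              have : ((2 / Real.sqrt π) * |x|) * ((2 / Real.sqrt π) * |x|)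
                  = (2 / Real.sqrt π) ^ 2 * (|x| * |x|) := by ring
              rw [this]
              have hxx : |x| * |x| ≤ x ^ 2 + 1 := by nlinarith [abs_mul_abs_self x]
              calc (2 / Real.sqrt π) ^ 2 * (|x| * |x|) * Real.exp (-(1 / (2 * c)) * x ^ 2)
                  ≤ (2 / Real.sqrt π) ^ 2 * (x ^ 2 + 1) * Real.exp (-(1 / (2 * c)) * x ^ 2) := by
                    apply mul_le_mul_of_nonneg_right _ (Real.exp_pos _).le
                    exact mul_le_mul_of_nonneg_left hxx (by positivity)
                _ = (2 / Real.sqrt π) ^ 2 * ((x ^ 2 + 1) * Real.exp (-(1/(2*c)) * x ^ 2)) := by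
                    ring)
      ((integrable_quad_gauss (show (0:ℝ) < 1/(2*c) by positivity)).const_mul _)
      (Eventually.of_forall fun x k' _hk => by
        have h1 : HasDerivAt (fun k : ℝ => erf (k * x))
            ((2 / Real.sqrt π) * Real.exp (-(k' * x) ^ 2) * x) k' := by
          simpa [Function.comp_def] using (hasDerivAt_erf (k' * x)).comp k' (hasDerivAt_mul_const x)
        exact (h1.const_mul (erf x)).mul_const _ |>.congr_deriv (by ring))
    obtain ⟨-, hd⟩ := key
    have hq : (0:ℝ) < k ^ 2 + 1 / (2 * c) := by positivity
    have hcalc : (∫ x : ℝ, erf x * ((2 / Real.sqrt π) * Real.exp (-(k * x) ^ 2) * x)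
        * Real.exp (-x ^ 2 / (2 * c))) = H k := by
      have hrw : ∀ x : ℝ, erf x * ((2 / Real.sqrt π) * Real.exp (-(k * x) ^ 2) * x)
          * Real.exp (-x ^ 2 / (2 * c))
          = (2 / Real.sqrt π) * (x * erf (1 * x)
            * Real.exp (-(k ^ 2 + 1 / (2 * c)) * x ^ 2)) := by
        intro x
        rw [one_mul]
        have hexp : Real.exp (-(k * x) ^ 2) * Real.exp (-x ^ 2 / (2 * c))
            = Real.exp (-(k ^ 2 + 1 / (2 * c)) * x ^ 2) := by
          rw [← Real.exp_add]
          congr 1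
          field_simp
          ring
        calc erf x * ((2 / Real.sqrt π) * Real.exp (-(k * x) ^ 2) * x)
              * Real.exp (-x ^ 2 / (2 * c))
            = (2 / Real.sqrt π) * (x * erf x
              * (Real.exp (-(k * x) ^ 2) * Real.exp (-x ^ 2 / (2 * c)))) := by ring
          _ = (2 / Real.sqrt π) * (x * erf x
              * Real.exp (-(k ^ 2 + 1 / (2 * c)) * x ^ 2)) := by rw [hexp]
      simp only [hrw]
      rw [integral_const_mul, integral_id_mul_erf_gauss 1 hq]
      -- algebra: (2/√π) * (1 / (q * √(1+q))) = H k  with q = k² + 1/(2c)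
      rw [hH]
      have hπ := sqrt_pi_pos
      have hq' : (1:ℝ) ^ 2 + (k ^ 2 + 1 / (2 * c)) = (1 + 2*c + 2*c*k^2) / (2*c) := by
        field_simp; ring
      have hqeq : k ^ 2 + 1 / (2 * c) = (1 + 2*c*k^2) / (2*c) := by field_simp; ring
      have hM : (0:ℝ) < 1 + 2*c + 2*c*k^2 := by positivity
      have h1k : (0:ℝ) < 1 + 2*c*k^2 := by positivity
      rw [hq', hqeq, Real.sqrt_div hM.le, Real.sqrt_mul (by positivity : (0:ℝ) ≤ 2*π)]
      rw [Real.sqrt_mul (by positivity : (0:ℝ) ≤ (2:ℝ)) π]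
      have hsπ : Real.sqrt π * Real.sqrt π = π := Real.mul_self_sqrt Real.pi_pos.le
      have h2cpos : (0:ℝ) < Real.sqrt (2*c) := Real.sqrt_pos.2 h2c
      have hMpos : (0:ℝ) < Real.sqrt (1 + 2*c + 2*c*k^2) := Real.sqrt_pos.2 hM
      have hs2 : Real.sqrt (2*c) * Real.sqrt (2*c) = 2*c := Real.mul_self_sqrt h2c.le
      have h2' : Real.sqrt 2 * Real.sqrt c = Real.sqrt (2*c) := by
        rw [← Real.sqrt_mul (by norm_num : (0:ℝ) ≤ 2)]
      field_simp
      have hsπ' : Real.sqrt π ^ 2 = π := Real.sq_sqrt Real.pi_pos.le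
      linear_combination (-(Real.sqrt 2 * Real.sqrt c)) * hsπ' - π * h2'
    rw [← hcalc]
    exact hd
  have hGd : ∀ k : ℝ, HasDerivAt G (H k) k := by
    intro k
    have h1k : (0:ℝ) < 1 + 2*c*k^2 := by positivity
    have h12 : (0:ℝ) < 1 + 2*c := by linarith
    have hM : (0:ℝ) < 1 + 2*c + 2*c*k^2 := by positivity
    have hU : (0:ℝ) < (1 + 2*c) * (1 + 2*c*k^2) := mul_pos h12 h1k
    set s1 := Real.sqrt (1 + 2*c) with hs1
    set s2 := Real.sqrt (1 + 2*c*k^2) with hs2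
    set sM := Real.sqrt (1 + 2*c + 2*c*k^2) with hsM
    have hs1p : 0 < s1 := Real.sqrt_pos.2 h12
    have hs2p : 0 < s2 := Real.sqrt_pos.2 h1k
    have hsMp : 0 < sM := Real.sqrt_pos.2 hM
    have hs1sq : s1 ^ 2 = 1 + 2*c := Real.sq_sqrt h12.le
    have hs2sq : s2 ^ 2 = 1 + 2*c*k^2 := Real.sq_sqrt h1k.le
    have hsMsq : sM ^ 2 = 1 + 2*c + 2*c*k^2 := Real.sq_sqrt hM.le
    have hsqU : Real.sqrt ((1 + 2*c) * (1 + 2*c*k^2)) = s1 * s2 :=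
      Real.sqrt_mul h12.le _
    -- derivative of inner function u k = (1+2c)*(1+2c k²)
    have hu : HasDerivAt (fun k : ℝ => (1 + 2*c) * (1 + 2*c*k^2))
        ((1 + 2*c) * (2*c*(2*k))) k := by
      have h := (((hasDerivAt_pow 2 k).const_mul (2*c)).const_add 1).const_mul (1 + 2*c)
      simpa using h.congr_deriv (by ring)
    have hden : HasDerivAt (fun k : ℝ => Real.sqrt ((1 + 2*c) * (1 + 2*c*k^2)))
        ((1 + 2*c) * (2*c*(2*k)) / (2 * (s1 * s2))) k := by
      have := hu.sqrt hU.ne'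
      rwa [hsqU] at this
    have hnum : HasDerivAt (fun k : ℝ => 2*c*k) (2*c) k := by
      simpa using (hasDerivAt_id k).const_mul (2*c)
    have hr : HasDerivAt (fun k : ℝ => 2*c*k / Real.sqrt ((1 + 2*c) * (1 + 2*c*k^2)))
        ((2*c * (s1 * s2) - 2*c*k * ((1 + 2*c) * (2*c*(2*k)) / (2 * (s1 * s2))))
          / (s1 * s2) ^ 2) k := by
      have := hnum.div hden (by rw [hsqU]; positivity)
      rwa [hsqU] at this
    have hrval : 2*c*k / Real.sqrt ((1 + 2*c) * (1 + 2*c*k^2)) = 2*c*k / (s1 * s2) := by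
      rw [hsqU]
    have hrabs : (2*c*k / (s1 * s2)) ^ 2 < 1 := by
      rw [div_pow, div_lt_one (by positivity)]
      have : (s1 * s2) ^ 2 = (1 + 2*c) * (1 + 2*c*k^2) := by
        rw [mul_pow, hs1sq, hs2sq]
      rw [this]
      nlinarith [sq_nonneg k, hc]
    have hne1 : 2*c*k / Real.sqrt ((1 + 2*c) * (1 + 2*c*k^2)) ≠ -1 := by
      rw [hrval]; intro h; rw [h] at hrabs; norm_num at hrabs
    have hne2 : 2*c*k / Real.sqrt ((1 + 2*c) * (1 + 2*c*k^2)) ≠ 1 := by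
      rw [hrval]; intro h; rw [h] at hrabs; norm_num at hrabs
    have harc := (Real.hasDerivAt_arcsin hne1 hne2).comp k hr
    have hfinal := (harc.const_mul (2/π)).const_mul (Real.sqrt (2*π*c))
    apply hfinal.congr_deriv
    -- algebra
    have hss : (s1*s2) ^ 2 = (1 + 2*c) * (1 + 2*c*k^2) := by
      rw [mul_pow, hs1sq, hs2sq]
    have h1mr : 1 - (2*c*k / Real.sqrt ((1 + 2*c) * (1 + 2*c*k^2))) ^ 2
        = (sM / (s1 * s2)) ^ 2 := by
      rw [hrval, div_pow, div_pow, hss, hsMsq]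
      field_simp
      ring
    rw [h1mr, Real.sqrt_sq (by positivity), one_div_div]
    have hE : (2*c*(s1*s2) - 2*c*k*((1 + 2*c)*(2*c*(2*k))/(2*(s1*s2))))/(s1*s2) ^ 2
        = 2*c/(s1*s2^3) := by
      rw [show (1 + 2*c) = s1^2 from hs1sq.symm]
      field_simp
      linear_combination hs2sq
    rw [hE]
    show Real.sqrt (2*π*c) * (2/π * (s1*s2/sM * (2*c/(s1*s2^3))))
      = Real.sqrt (2*π*c) * (2/π) * (2*c/((1 + 2*c*k^2) * sM))
    rw [show (1 + 2*c*k^2) = s2^2 from hs2sq.symm]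
    have hπ := Real.pi_pos
    field_simp
  have h0 : F 0 = G 0 := by
    rw [hF, hG]
    simp only [zero_mul, erf_zero, mul_zero, zero_div, Real.arcsin_zero]
    simp [erf_zero]
  exact eq_of_hasDerivAt_of_eq_zero hFd hGd h0 k

/-- the Erf NNGP kernel. For (t₁,t₂) centered jointly Gaussian
with positive definite covariance [[cмм, cмν],[cмν, cνν]],
E[erf(t₁)erf(t₂)] = (2/π) arcsin(2cмν/√((1+2cмм)(1+2cνν))). -/
theorem erf_kernel (cmm cmn cnn : ℝ)
    (hposdef : 0 < cmm ∧ 0 < cnn ∧ cmn ^ 2 < cmm * cnn) :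
    (∫ t₁ : ℝ, ∫ t₂ : ℝ,
        (erf t₁ * erf t₂) *
          ((2 * π * Real.sqrt (cmm * cnn - cmn ^ 2))⁻¹ *
            Real.exp (-(cnn * t₁ ^ 2 - 2 * cmn * t₁ * t₂ + cmm * t₂ ^ 2) /
              (2 * (cmm * cnn - cmn ^ 2)))))
      = (2 / π) * Real.arcsin (2 * cmn / Real.sqrt ((1 + 2 * cmm) * (1 + 2 * cnn))) := by
  obtain ⟨hmm, hnn, hpd⟩ := hposdef
  have hD : (0:ℝ) < cmm * cnn - cmn ^ 2 := by linarith
  set D := cmm * cnn - cmn ^ 2 with hDdef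
  have hv : (0:ℝ) < D / cmm := by positivity
  set v := D / cmm with hvdef
  have h12v : (0:ℝ) < 1 + 2 * v := by linarith
  have hsv : (0:ℝ) < Real.sqrt (1 + 2 * v) := Real.sqrt_pos.2 h12v
  set K := (cmn / cmm) / Real.sqrt (1 + 2 * v) with hKdef
  have hπ := Real.pi_pos
  have hsD : (0:ℝ) < Real.sqrt D := Real.sqrt_pos.2 hD
  -- inner integral
  have hinner : ∀ t₁ : ℝ, (∫ t₂ : ℝ,
      (erf t₁ * erf t₂) * ((2 * π * Real.sqrt D)⁻¹ *
        Real.exp (-(cnn * t₁ ^ 2 - 2 * cmn * t₁ * t₂ + cmm * t₂ ^ 2) / (2 * D))))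
      = ((2 * π * Real.sqrt D)⁻¹ * Real.sqrt (2 * π * v)) *
        (erf t₁ * erf (K * t₁) * Real.exp (-t₁ ^ 2 / (2 * cmm))) := by
    intro t₁
    set μ := (cmn / cmm) * t₁ with hμdef
    have hfact : ∀ t₂ : ℝ, (erf t₁ * erf t₂) * ((2 * π * Real.sqrt D)⁻¹ *
        Real.exp (-(cnn * t₁ ^ 2 - 2 * cmn * t₁ * t₂ + cmm * t₂ ^ 2) / (2 * D)))
        = ((2 * π * Real.sqrt D)⁻¹ * (erf t₁ * Real.exp (-t₁ ^ 2 / (2 * cmm)))) *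
          (erf (t₂ - μ + μ) * Real.exp (-(t₂ - μ) ^ 2 / (2 * v))) := by
      intro t₂
      rw [sub_add_cancel]
      have hexp : Real.exp (-(cnn * t₁ ^ 2 - 2 * cmn * t₁ * t₂ + cmm * t₂ ^ 2) / (2 * D))
          = Real.exp (-t₁ ^ 2 / (2 * cmm)) * Real.exp (-(t₂ - μ) ^ 2 / (2 * v)) := by
        rw [← Real.exp_add]
        congr 1
        rw [hμdef, hvdef, hDdef]
        have hD' : cmm * cnn - cmn ^ 2 ≠ 0 := hD.ne'
        field_simp
        have hX : (cmm * cnn - cmn ^ 2) * (cmm * cnn - cmn ^ 2)⁻¹ = 1 := mul_inv_cancel₀ hD'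
        linear_combination (-t₁ ^ 2) * hX
      rw [hexp]
      ring
    simp only [hfact]
    rw [integral_const_mul]
    have hshift : (∫ t₂ : ℝ, erf (t₂ - μ + μ) * Real.exp (-(t₂ - μ) ^ 2 / (2 * v)))
        = ∫ x : ℝ, erf (x + μ) * Real.exp (-x ^ 2 / (2 * v)) := by
      rw [← integral_sub_right_eq_self
        (fun x : ℝ => erf (x + μ) * Real.exp (-x ^ 2 / (2 * v))) μ]
    rw [hshift, integral_erf_shift_gauss hv μ]
    have hKt : μ / Real.sqrt (1 + 2 * v) = K * t₁ := by
      rw [hμdef, hKdef]; ring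
    rw [hKt]
    ring
  simp only [hinner]
  rw [integral_const_mul, integral_erf_mul_erf_gauss hmm K]
  -- constants
  have hconst : (2 * π * Real.sqrt D)⁻¹ * Real.sqrt (2 * π * v) * Real.sqrt (2 * π * cmm)
      = 1 := by
    rw [mul_assoc, ← Real.sqrt_mul (by positivity : (0:ℝ) ≤ 2 * π * v)]
    have : (2 * π * v) * (2 * π * cmm) = (2 * π) ^ 2 * D := by
      rw [hvdef]; field_simp
    rw [this, Real.sqrt_mul (by positivity : (0:ℝ) ≤ (2*π)^2),
      Real.sqrt_sq (by positivity : (0:ℝ) ≤ 2*π)]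
    field_simp
  -- arcsin argument
  have harg : 2 * cmm * K / Real.sqrt ((1 + 2 * cmm) * (1 + 2 * cmm * K ^ 2))
      = 2 * cmn / Real.sqrt ((1 + 2 * cmm) * (1 + 2 * cnn)) := by
    have hsvsq : Real.sqrt (1 + 2 * v) ^ 2 = 1 + 2 * v := Real.sq_sqrt h12v.le
    have hX : (0:ℝ) < (1 + 2 * cmm) * (1 + 2 * cnn) := by
      have : (0:ℝ) < 1 + 2 * cmm := by linarith
      have : (0:ℝ) < 1 + 2 * cnn := by linarith
      positivity
    have hK2 : K ^ 2 = cmn ^ 2 / (cmm ^ 2 * (1 + 2 * v)) := by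
      rw [hKdef, div_pow, div_pow, hsvsq, div_div]
    have h2 : (1 + 2 * cmm) * (1 + 2 * cmm * K ^ 2)
        = ((1 + 2 * cmm) * (1 + 2 * cnn)) / Real.sqrt (1 + 2 * v) ^ 2 := by
      rw [hsvsq, hK2, hvdef, hDdef]
      have hcmm := hmm.ne'
      have h1 : cmm + 2 * (cmm * cnn - cmn ^ 2) > 0 := by nlinarith
      field_simp
      ring
    rw [h2, Real.sqrt_div hX.le, Real.sqrt_sq hsv.le, div_div_eq_mul_div]
    congr 1
    rw [hKdef]
    field_simp
  rw [harg]
  calc (2 * π * Real.sqrt D)⁻¹ * Real.sqrt (2 * π * v) * (Real.sqrt (2 * π * cmm) *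
        (2 / π * Real.arcsin (2 * cmn / Real.sqrt ((1 + 2 * cmm) * (1 + 2 * cnn)))))
      = ((2 * π * Real.sqrt D)⁻¹ * Real.sqrt (2 * π * v) * Real.sqrt (2 * π * cmm)) *
        (2 / π * Real.arcsin (2 * cmn / Real.sqrt ((1 + 2 * cmm) * (1 + 2 * cnn)))) := by ring
    _ = 2 / π * Real.arcsin (2 * cmn / Real.sqrt ((1 + 2 * cmm) * (1 + 2 * cnn))) := by
        rw [hconst]; ring
end

section
/- Let K be a symmetric positive definite P×P real matrix, y ∈ ℝ^P, α > 0, λ > 0. Define S(Q, Q̄) = −QQ̄ + log(1+Q) + (α/P)·Tr log(β(𝟙/β + Q̄K/λ)) + (α/P)·yᵀ(𝟙/β + Q̄K/λ)⁻¹y for Q > −1, Q̄ > 0. In the limit β → ∞, the stationarity conditions ∂S/∂Q = 0 and ∂S/∂Q̄ = 0 are equivalent to Q̄ = 1/(1+Q) and Q = α/Q̄ − (α/Q̄²)·(1/P)yᵀ(K/λ)⁻¹y. -/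
open Matrix Filter

lemma myaux_conj_affine {P : ℕ} (V W : Matrix (Fin P) (Fin P) ℝ) (hVW : V * W = 1)
    (K : Matrix (Fin P) (Fin P) ℝ) (μ : Fin P → ℝ) (hKd : K = V * Matrix.diagonal μ * W)
    (a b : ℝ) :
    a • (1 : Matrix (Fin P) (Fin P) ℝ) + b • K
      = V * Matrix.diagonal (fun i => a + b * μ i) * W := by
  have h : Matrix.diagonal (fun i => a + b * μ i)
      = a • (1 : Matrix (Fin P) (Fin P) ℝ) + b • Matrix.diagonal μ := by
    ext i j
    simp [Matrix.diagonal_apply, Matrix.one_apply]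
    split_ifs <;> ring
  rw [h, hKd]
  rw [Matrix.mul_add, Matrix.add_mul, Matrix.mul_smul, Matrix.smul_mul, Matrix.mul_one, hVW,
    Matrix.mul_smul, Matrix.smul_mul]

lemma myaux_conj_det {P : ℕ} (V W : Matrix (Fin P) (Fin P) ℝ) (hVW : V * W = 1)
    (d : Fin P → ℝ) :
    Matrix.det (V * Matrix.diagonal d * W) = ∏ i, d i := by
  have h1 : Matrix.det V * Matrix.det W = 1 := by
    rw [← Matrix.det_mul, hVW, Matrix.det_one]
  rw [Matrix.det_mul, Matrix.det_mul, Matrix.det_diagonal]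
  rw [mul_right_comm, h1, one_mul]

lemma myaux_conj_inv {P : ℕ} (V W : Matrix (Fin P) (Fin P) ℝ) (hVW : V * W = 1)
    (hWV : W * V = 1) (d : Fin P → ℝ) (hd : ∀ i, d i ≠ 0) :
    (V * Matrix.diagonal d * W)⁻¹ = V * Matrix.diagonal (fun i => (d i)⁻¹) * W := by
  apply Matrix.inv_eq_right_inv
  simp only [Matrix.mul_assoc]
  rw [← Matrix.mul_assoc W V, hWV, Matrix.one_mul, ← Matrix.mul_assoc (Matrix.diagonal d),
    Matrix.diagonal_mul_diagonal]
  have : (fun i => d i * (d i)⁻¹) = fun _ => (1:ℝ) := funext fun i => mul_inv_cancel₀ (hd i)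
  rw [this, Matrix.diagonal_one, Matrix.one_mul, hVW]

lemma myaux_conj_quad {P : ℕ} (V : Matrix (Fin P) (Fin P) ℝ)
    (d : Fin P → ℝ) (y : Fin P → ℝ) :
    y ⬝ᵥ (V * Matrix.diagonal d * Vᵀ) *ᵥ y
      = ∑ i, d i * (Vᵀ *ᵥ y) i ^ 2 := by
  rw [← Matrix.mulVec_mulVec, ← Matrix.mulVec_mulVec, Matrix.dotProduct_mulVec,
    ← Matrix.mulVec_transpose]
  simp only [dotProduct, Matrix.mulVec_diagonal]
  exact Finset.sum_congr rfl fun i _ => by ring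

/-- for the one-hidden-layer effective action
S(Q,Q̄) = −QQ̄ + log(1+Q) + (α/P)·Tr log(β(𝟙/β + Q̄K/λ)) + (α/P)·yᵀ(𝟙/β + Q̄K/λ)⁻¹y
(with Tr log written as log det), the zero-temperature (β → ∞) stationarity
conditions ∂S/∂Q → 0 and ∂S/∂Q̄ → 0 are equivalent to
Q̄ = 1/(1+Q) and Q = α/Q̄ − (α/Q̄²)·(1/P)·yᵀ(K/λ)⁻¹y. -/
theorem saddle_point_equations_zero_temperature
    (P : ℕ) (hP : 0 < P) (K : Matrix (Fin P) (Fin P) ℝ) (hK : K.PosDef)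
    (y : Fin P → ℝ) (α lam : ℝ) (hα : 0 < α) (hlam : 0 < lam)
    (Q Qb : ℝ) (hQ : -1 < Q) (hQb : 0 < Qb) :
    let S : ℝ → ℝ → ℝ → ℝ := fun β Q' Qb' =>
      -Q' * Qb' + Real.log (1 + Q')
        + (α / P) * Real.log (Matrix.det (β • (β⁻¹ • (1 : Matrix (Fin P) (Fin P) ℝ)
            + (Qb' / lam) • K)))
        + (α / P) * (y ⬝ᵥ (β⁻¹ • (1 : Matrix (Fin P) (Fin P) ℝ)
            + (Qb' / lam) • K)⁻¹ *ᵥ y)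
    (Tendsto (fun β : ℝ => deriv (fun Q' => S β Q' Qb) Q) atTop (nhds 0) ∧
     Tendsto (fun β : ℝ => deriv (fun Qb' => S β Q Qb') Qb) atTop (nhds 0))
    ↔ (Qb = 1 / (1 + Q) ∧
        Q = α / Qb - (α / Qb ^ 2) * ((1 / P) * (y ⬝ᵥ (lam⁻¹ • K)⁻¹ *ᵥ y))) := by
  intro S
  -- spectral setup
  have hH := hK.1
  set V : Matrix (Fin P) (Fin P) ℝ := ((hH.eigenvectorUnitary : Matrix (Fin P) (Fin P) ℝ)) with hV
  have hstar : star V = Vᵀ := by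
    rw [Matrix.star_eq_conjTranspose]
    ext i j; simp [Matrix.conjTranspose_apply]
  have hVW : V * Vᵀ = 1 := by
    rw [← hstar]; exact (Matrix.mem_unitaryGroup_iff).mp hH.eigenvectorUnitary.2
  have hWV : Vᵀ * V = 1 := by
    rw [← hstar]; exact (Matrix.mem_unitaryGroup_iff').mp hH.eigenvectorUnitary.2
  set μ : Fin P → ℝ := hH.eigenvalues with hμdef
  have hspec : K = V * Matrix.diagonal μ * Vᵀ := by
    rw [← hstar]
    simpa using hH.spectral_theorem
  have hpos : ∀ i, 0 < μ i := hK.eigenvalues_pos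
  set s : Fin P → ℝ := fun i => μ i / lam with hsdef
  set c : Fin P → ℝ := Vᵀ *ᵥ y with hcdef
  have hs : ∀ i, 0 < s i := fun i => div_pos (hpos i) hlam
  have hPr : (0:ℝ) < P := by exact_mod_cast hP
  have hQ1 : (0:ℝ) < 1 + Q := by linarith
  -- Part 1 : derivative in Q'
  have h1 : ∀ β : ℝ, deriv (fun Q' => S β Q' Qb) Q = -Qb + (1+Q)⁻¹ := by
    intro β
    have hA : HasDerivAt (fun Q' : ℝ => -Q' * Qb) (-Qb) Q := by
      simpa using ((hasDerivAt_id Q).neg.mul_const Qb)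
    have h' : HasDerivAt (fun Q' : ℝ => 1 + Q') 1 Q := by
      simpa using (hasDerivAt_id Q).const_add (1:ℝ)
    have hB : HasDerivAt (fun Q' : ℝ => Real.log (1 + Q')) ((1+Q)⁻¹) Q := by
      simpa [Function.comp_def] using (Real.hasDerivAt_log (ne_of_gt hQ1)).comp Q h'
    exact (((hA.add hB).add_const _).add_const _).deriv
  have e1 : (Tendsto (fun β : ℝ => deriv (fun Q' => S β Q' Qb) Q) atTop (nhds 0))
      ↔ Qb = 1 / (1 + Q) := by
    rw [show (fun β : ℝ => deriv (fun Q' => S β Q' Qb) Q) = fun _ => -Qb + (1+Q)⁻¹ from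
      funext h1]
    rw [tendsto_const_nhds_iff, one_div]
    constructor <;> intro h <;> linarith
  -- Part 2 : derivative in Qb'
  set g : ℝ → ℝ → ℝ := fun β t =>
    -Q * t + Real.log (1 + Q)
      + (α / P) * ((P : ℝ) * Real.log β + ∑ i, Real.log (β⁻¹ + t * s i))
      + (α / P) * (∑ i, (β⁻¹ + t * s i)⁻¹ * (c i)^2) with hgdef
  -- eventual equality of S and g
  have hE : ∀ β : ℝ, 0 < β → ∀ t : ℝ, 0 < t → S β Q t = g β t := by
    intro β hβ t ht
    have hβ' : (0:ℝ) < β⁻¹ := inv_pos.mpr hβ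
    have hdpos : ∀ i, 0 < β⁻¹ + t * s i := fun i => by
      have := mul_pos ht (hs i); linarith
    have hdne : ∀ i, β⁻¹ + t * s i ≠ 0 := fun i => ne_of_gt (hdpos i)
    have hfun : (fun i => β⁻¹ + t / lam * μ i) = (fun i => β⁻¹ + t * s i) := by
      funext i; simp only [hsdef]; ring
    have hM : β⁻¹ • (1 : Matrix (Fin P) (Fin P) ℝ) + (t / lam) • K
        = V * Matrix.diagonal (fun i => β⁻¹ + t * s i) * Vᵀ := by
      rw [myaux_conj_affine V Vᵀ hVW K μ hspec β⁻¹ (t/lam), hfun]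
    have hdet : Matrix.det (β • (β⁻¹ • (1 : Matrix (Fin P) (Fin P) ℝ) + (t / lam) • K))
        = β ^ P * ∏ i, (β⁻¹ + t * s i) := by
      rw [Matrix.det_smul, hM, myaux_conj_det V Vᵀ hVW]
      simp
    have hlogdet : Real.log (Matrix.det (β • (β⁻¹ • (1 : Matrix (Fin P) (Fin P) ℝ)
        + (t / lam) • K)))
        = (P : ℝ) * Real.log β + ∑ i, Real.log (β⁻¹ + t * s i) := by
      rw [hdet, Real.log_mul (pow_ne_zero _ (ne_of_gt hβ))
        (Finset.prod_ne_zero_iff.mpr fun i _ => hdne i), Real.log_pow,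
        Real.log_prod fun i _ => hdne i]
    have hquad : y ⬝ᵥ (β⁻¹ • (1 : Matrix (Fin P) (Fin P) ℝ) + (t / lam) • K)⁻¹ *ᵥ y
        = ∑ i, (β⁻¹ + t * s i)⁻¹ * (c i)^2 := by
      rw [hM, myaux_conj_inv V Vᵀ hVW hWV _ hdne, myaux_conj_quad]
    show _ = g β t
    rw [hgdef]
    simp only [S]
    rw [hlogdet, hquad]
  -- derivative of g at Qb, for positive β
  set D : ℝ → ℝ := fun β =>
    -Q + (α / P) * (∑ i, (β⁻¹ + Qb * s i)⁻¹ * s i)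
      + (α / P) * (∑ i, -(s i) / (β⁻¹ + Qb * s i)^2 * (c i)^2) with hDdef
  have hD : ∀ β : ℝ, 0 < β → deriv (fun Qb' => S β Q Qb') Qb = D β := by
    intro β hβ
    have hβ' : (0:ℝ) < β⁻¹ := inv_pos.mpr hβ
    have hdpos : ∀ i, 0 < β⁻¹ + Qb * s i := fun i => by
      have := mul_pos hQb (hs i); linarith
    have hev : (fun Qb' => S β Q Qb') =ᶠ[nhds Qb] g β := by
      filter_upwards [isOpen_Ioi.mem_nhds (show Qb ∈ Set.Ioi (0:ℝ) from hQb)] with t ht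
      exact hE β hβ t ht
    rw [hev.deriv_eq]
    have h1 : HasDerivAt (fun t : ℝ => -Q * t + Real.log (1 + Q)) (-Q) Qb := by
      simpa using ((hasDerivAt_id Qb).const_mul (-Q)).add_const (Real.log (1+Q))
    have hinner : ∀ i, HasDerivAt (fun t : ℝ => β⁻¹ + t * s i) (s i) Qb := fun i => by
      simpa using ((hasDerivAt_id Qb).mul_const (s i)).const_add (β⁻¹)
    have h2 : HasDerivAt (fun t : ℝ => (P : ℝ) * Real.log β + ∑ i, Real.log (β⁻¹ + t * s i))
        (∑ i, (β⁻¹ + Qb * s i)⁻¹ * s i) Qb := by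
      refine HasDerivAt.const_add _ (HasDerivAt.fun_sum fun i _ => ?_)
      simpa [Function.comp_def] using (Real.hasDerivAt_log (ne_of_gt (hdpos i))).comp Qb (hinner i)
    have h3 : HasDerivAt (fun t : ℝ => ∑ i, (β⁻¹ + t * s i)⁻¹ * (c i)^2)
        (∑ i, -(s i) / (β⁻¹ + Qb * s i)^2 * (c i)^2) Qb := by
      refine HasDerivAt.fun_sum fun i _ => ?_
      exact ((hinner i).inv (ne_of_gt (hdpos i))).mul_const _
    exact (((h1.add (h2.const_mul (α / P))).add (h3.const_mul (α / P))).deriv)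
  -- the limit of D as β → ∞
  set L : ℝ :=
    -Q + (α / P) * (∑ i, (Qb * s i)⁻¹ * s i)
      + (α / P) * (∑ i, -(s i) / (Qb * s i)^2 * (c i)^2) with hLdef
  have hlim : Tendsto D atTop (nhds L) := by
    have hbase : ∀ i : Fin P, Tendsto (fun β : ℝ => β⁻¹ + Qb * s i) atTop (nhds (Qb * s i)) := by
      intro i
      simpa using tendsto_inv_atTop_zero.add_const (Qb * s i)
    have hne : ∀ i : Fin P, Qb * s i ≠ 0 := fun i => ne_of_gt (mul_pos hQb (hs i))
    refine Tendsto.add (Tendsto.add tendsto_const_nhds ?_) ?_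
    · exact (tendsto_finset_sum _ fun i _ =>
        ((hbase i).inv₀ (hne i)).mul_const (s i)).const_mul _
    · refine (tendsto_finset_sum _ fun i _ => ?_).const_mul _
      exact (Tendsto.div tendsto_const_nhds ((hbase i).pow 2)
        (pow_ne_zero _ (hne i))).mul_const _
  have hT : Tendsto (fun β : ℝ => deriv (fun Qb' => S β Q Qb') Qb) atTop (nhds L) := by
    refine Tendsto.congr' ?_ hlim
    filter_upwards [eventually_gt_atTop (0:ℝ)] with β hβ
    exact (hD β hβ).symm
  -- value of the quadratic form in the target
  have hquadK : y ⬝ᵥ (lam⁻¹ • K)⁻¹ *ᵥ y = ∑ i, (s i)⁻¹ * (c i)^2 := by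
    have hKs : lam⁻¹ • K = V * Matrix.diagonal s * Vᵀ := by
      have := myaux_conj_affine V Vᵀ hVW K μ hspec 0 lam⁻¹
      simp only [zero_smul, zero_add] at this
      have hfun2 : (fun i => lam⁻¹ * μ i) = s := by funext i; simp only [hsdef]; ring
      rw [this, hfun2]
    rw [hKs, myaux_conj_inv V Vᵀ hVW hWV s (fun i => ne_of_gt (hs i)), myaux_conj_quad]
  have hLval : L = -Q + α / Qb - (α / Qb ^ 2) * ((1 / P) * (y ⬝ᵥ (lam⁻¹ • K)⁻¹ *ᵥ y)) := by
    rw [hquadK, hLdef]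
    have hA : ∑ i : Fin P, (Qb * s i)⁻¹ * s i = (P : ℝ) * Qb⁻¹ := by
      rw [Finset.sum_congr rfl (fun i _ => show (Qb * s i)⁻¹ * s i = Qb⁻¹ by
        have h1 := ne_of_gt (hs i); have h2 := ne_of_gt hQb
        field_simp)]
      simp [mul_comm]
    have hB : ∑ i : Fin P, -(s i) / (Qb * s i)^2 * (c i)^2
        = -(Qb^2)⁻¹ * ∑ i, (s i)⁻¹ * (c i)^2 := by
      rw [Finset.mul_sum]
      refine Finset.sum_congr rfl fun i _ => ?_
      have := ne_of_gt (hs i)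
      have := ne_of_gt hQb
      field_simp
    rw [hA, hB]
    field_simp
    ring
  have e2 : (Tendsto (fun β : ℝ => deriv (fun Qb' => S β Q Qb') Qb) atTop (nhds 0))
      ↔ Q = α / Qb - (α / Qb ^ 2) * ((1 / P) * (y ⬝ᵥ (lam⁻¹ • K)⁻¹ *ᵥ y)) := by
    constructor
    · intro h
      have h0 : L = 0 := (tendsto_nhds_unique h hT).symm
      rw [hLval] at h0
      linarith
    · intro h
      have h0 : L = 0 := by rw [hLval]; linarith
      rw [← h0]
      exact hT
  exact and_congr e1 e2
end
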